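/- Let G be a graph with at least two vertices, let v be a vertex of G, and let G' be the graph obtained from G by adding a new vertex v' and the edge vv'. Then: (i) a set S' of vertices of G' is a type I set for v' in G' with L_{S'}(v') = 1 if and only if S' ⊆ V(G), S' is a type I set for v in G, and L_{S'}(v) = 0; (ii) moreover, if R ⊆ V(G) is a type I set for v in G with L_R(v) = −1, then S = R ∪ {v} is a type I set for v' in G' with L_S(v') = 1. -/

import Mathlib

/-- A set of vertices is independent: no two of its vertices are adjacent. -/
def IndepSet {V : Type*} (G : SimpleGraph V) (S : Set V) : Prop :=
  ∀ u ∈ S, ∀ w ∈ S, ¬ G.Adj u w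

/-- `S` is a type I set for `v` in `G`: `S` is independent, every vertex
`u ∉ S ∪ {v}` has at least one and at most two neighbors in `S`, and `v` either
belongs to `S` or has at most two neighbors in `S`. -/
def TypeISet {V : Type*} (G : SimpleGraph V) (v : V) (S : Set V) : Prop :=
  IndepSet G S ∧
    (∀ u, u ∉ S → u ≠ v →
      1 ≤ (S ∩ G.neighborSet u).ncard ∧ (S ∩ G.neighborSet u).ncard ≤ 2) ∧
    (v ∈ S ∨ (S ∩ G.neighborSet v).ncard ≤ 2)

/-- The labeling `L_S(v) = l` : `0` if `v ∈ S`; `k ≥ 1` if `v ∉ S` and `v` has exactly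
`k` neighbors in `S`; `-1` if `N[v] ∩ S = ∅` and every neighbor of `v` has exactly one
neighbor in `S`; `-2` if `N[v] ∩ S = ∅` and some neighbor of `v` has exactly two
neighbors in `S`. -/
def HasLabel {V : Type*} (G : SimpleGraph V) (v : V) (S : Set V) (l : ℤ) : Prop :=
  (v ∈ S ∧ l = 0) ∨
  (v ∉ S ∧ ∃ k : ℕ, 1 ≤ k ∧ (S ∩ G.neighborSet v).ncard = k ∧ l = (k : ℤ)) ∨
  (v ∉ S ∧ S ∩ G.neighborSet v = ∅ ∧
    (∀ u ∈ G.neighborSet v, (S ∩ G.neighborSet u).ncard = 1) ∧ l = -1) ∨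
  (v ∉ S ∧ S ∩ G.neighborSet v = ∅ ∧
    (∃ u ∈ G.neighborSet v, (S ∩ G.neighborSet u).ncard = 2) ∧ l = -2)

/-- The star `K_{1,r}` with center `none` and the `r` leaves `some i`. -/
def starGraph (r : ℕ) : SimpleGraph (Option (Fin r)) where
  Adj a b := (a = none ∧ b ≠ none) ∨ (a ≠ none ∧ b = none)
  symm := by refine ⟨?_⟩; intro a b h; tauto
  loopless := by refine ⟨?_⟩; intro a h; tauto

/-- The graph obtained from `G` by adding a new vertex `none` adjacent only to `v`. -/
def addLeaf {V : Type*} (G : SimpleGraph V) (v : V) : SimpleGraph (Option V) where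
  Adj a b := match a, b with
    | some x, some y => G.Adj x y
    | none, some y => y = v
    | some x, none => x = v
    | none, none => False
  symm := by
    refine ⟨?_⟩
    intro a b h
    match a, b with
    | some x, some y => exact h.symm
    | none, some y => exact h
    | some x, none => exact h
    | none, none => exact h
  loopless := by
    refine ⟨?_⟩
    intro a h
    match a with
    | some x => exact G.loopless.irrefl x h
    | none => exact h

/-- The graph obtained from the disjoint union of `G` and `H` by adding the edge
between `v` (in `G`) and `v'` (in `H`). -/
def joinAt {V W : Type*} (G : SimpleGraph V) (H : SimpleGraph W) (v : V) (v' : W) :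
    SimpleGraph (V ⊕ W) where
  Adj a b := match a, b with
    | Sum.inl x, Sum.inl y => G.Adj x y
    | Sum.inr x, Sum.inr y => H.Adj x y
    | Sum.inl x, Sum.inr y => x = v ∧ y = v'
    | Sum.inr x, Sum.inl y => x = v' ∧ y = v
  symm := by
    refine ⟨?_⟩
    intro a b h
    match a, b with
    | Sum.inl x, Sum.inl y => exact h.symm
    | Sum.inr x, Sum.inr y => exact h.symm
    | Sum.inl x, Sum.inr y => exact ⟨h.2, h.1⟩
    | Sum.inr x, Sum.inl y => exact ⟨h.2, h.1⟩
  loopless := by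
    refine ⟨?_⟩
    intro a h
    match a with
    | Sum.inl x => exact G.loopless.irrefl x h
    | Sum.inr x => exact H.loopless.irrefl x h

/-! Adding the leaf `v'` changes no neighbourhood inside `G` except that of `v`, so outside
`{v, v'}` the type I conditions in `G` and `G'` coincide. Label `1` at the leaf `v'` says exactly
that its only neighbour `v` lies in the set, i.e. that `v` has label `0` in `G`. For (ii), a label
`-1` at `v` means that no neighbour of `v` lies in `R` and each has exactly one neighbour in `R`,
so `R ∪ {v}` is still independent and gives each neighbour of `v` exactly two neighbours. -/

lemma eq_image_some_preimage_of_none_notMem {α : Type*} {s : Set (Option α)} (h : none ∉ s) :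
    s = some '' (some ⁻¹' s) := by
  rw [Set.image_preimage_eq_range_inter, eq_comm, Set.inter_eq_right,
    ← compl_compl (Set.range some), Set.compl_range_some, Set.subset_compl_singleton_iff]
  exact h

section Labels

variable {V : Type*} (G : SimpleGraph V) (v : V) (S : Set V)

lemma hasLabel_zero_iff : HasLabel G v S 0 ↔ v ∈ S := by
  unfold HasLabel
  constructor
  · rintro (⟨hv, -⟩ | ⟨-, k, hk, -, hl⟩ | ⟨-, -, -, hl⟩ | ⟨-, -, -, hl⟩)
    · exact hv
    all_goals omega
  · exact fun hv => Or.inl ⟨hv, rfl⟩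

lemma hasLabel_one_iff : HasLabel G v S 1 ↔ v ∉ S ∧ (S ∩ G.neighborSet v).ncard = 1 := by
  unfold HasLabel
  constructor
  · rintro (⟨-, hl⟩ | ⟨hv, k, -, hk, hl⟩ | ⟨-, -, -, hl⟩ | ⟨-, -, -, hl⟩)
    · omega
    · exact ⟨hv, by omega⟩
    all_goals omega
  · exact fun ⟨hv, hk⟩ => Or.inr <| Or.inl ⟨hv, 1, le_rfl, hk, rfl⟩

lemma hasLabel_neg_one_iff : HasLabel G v S (-1) ↔
    v ∉ S ∧ S ∩ G.neighborSet v = ∅ ∧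
      ∀ u ∈ G.neighborSet v, (S ∩ G.neighborSet u).ncard = 1 := by
  unfold HasLabel
  constructor
  · rintro (⟨-, hl⟩ | ⟨-, k, hk, -, hl⟩ | ⟨hv, hN, hone, -⟩ | ⟨-, -, -, hl⟩)
    · omega
    · omega
    · exact ⟨hv, hN, hone⟩
    · omega
  · exact fun ⟨hv, hN, hone⟩ => Or.inr <| Or.inr <| Or.inl ⟨hv, hN, hone, rfl⟩

end Labels

section AddLeaf

variable {V : Type*} (G : SimpleGraph V) (v : V)

lemma addLeaf_neighborSet_none : (addLeaf G v).neighborSet none = {some v} := by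
  ext a
  cases a <;> simp [SimpleGraph.neighborSet, addLeaf, eq_comm]

lemma addLeaf_neighborSet_some {x : V} (hx : x ≠ v) :
    (addLeaf G v).neighborSet (some x) = some '' G.neighborSet x := by
  ext a
  cases a <;> simp [SimpleGraph.neighborSet, addLeaf, hx]

lemma ncard_image_some_inter_addLeaf_neighborSet {x : V} (hx : x ≠ v) (S : Set V) :
    (some '' S ∩ (addLeaf G v).neighborSet (some x)).ncard = (S ∩ G.neighborSet x).ncard := by
  rw [addLeaf_neighborSet_some G v hx, ← Set.image_inter (Option.some_injective V),
    Set.ncard_image_of_injective _ (Option.some_injective V)]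

lemma indepSet_addLeaf_image_some_iff {S : Set V} :
    IndepSet (addLeaf G v) (some '' S) ↔ IndepSet G S := by
  simp only [IndepSet, Set.forall_mem_image]
  rfl

lemma hasLabel_addLeaf_one_iff (S : Set V) :
    HasLabel (addLeaf G v) none (some '' S) 1 ↔ v ∈ S := by
  rw [hasLabel_one_iff, addLeaf_neighborSet_none]
  constructor
  · rintro ⟨-, h1⟩
    have hne : (some '' S ∩ {some v}).Nonempty := Set.nonempty_of_ncard_ne_zero (by omega)
    simpa using Set.inter_singleton_nonempty.1 hne
  · intro hv
    refine ⟨by simp, ?_⟩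
    rw [Set.inter_eq_right.2 (Set.singleton_subset_iff.2 (Set.mem_image_of_mem some hv)),
      Set.ncard_singleton]

lemma typeISet_addLeaf_image_some_iff {S : Set V} (hv : v ∈ S) :
    TypeISet (addLeaf G v) none (some '' S) ↔ TypeISet G v S := by
  have hleaf : (some '' S ∩ (addLeaf G v).neighborSet none).ncard ≤ 2 := by
    rw [addLeaf_neighborSet_none]
    exact (Set.ncard_le_ncard Set.inter_subset_right).trans (by simp)
  simp only [TypeISet, indepSet_addLeaf_image_some_iff, hleaf, or_true, hv, true_or, and_true]
  refine and_congr_right fun _ => ⟨fun h x hx hxv => ?_, fun h => ?_⟩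
  · rw [← ncard_image_some_inter_addLeaf_neighborSet G v hxv]
    exact h (some x) (by simpa using hx) (Option.some_ne_none x)
  · rintro (_ | x) hx hxnone
    · exact absurd rfl hxnone
    have hxS : x ∉ S := fun h => hx ⟨x, h, rfl⟩
    have hxv : x ≠ v := ne_of_mem_of_not_mem hv hxS |>.symm
    rw [ncard_image_some_inter_addLeaf_neighborSet G v hxv]
    exact h x hxS hxv

end AddLeaf

lemma typeISet_insert_of_hasLabel_neg_one {V : Type*} {G : SimpleGraph V} {v : V} {R : Set V}
    (hR : TypeISet G v R) (hl : HasLabel G v R (-1)) : TypeISet G v (insert v R) := by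
  obtain ⟨hvR, hRN, hone⟩ := (hasLabel_neg_one_iff G v R).1 hl
  obtain ⟨hind, hcount, -⟩ := hR
  have hnotAdj : ∀ x ∈ R, ¬ G.Adj v x := fun x hx hvx =>
    Set.eq_empty_iff_forall_notMem.1 hRN x ⟨hx, hvx⟩
  refine ⟨?_, fun u hu huv => ?_, Or.inl (Set.mem_insert v R)⟩
  · rintro x (rfl | hx) y (rfl | hy) hxy
    exacts [G.loopless.irrefl _ hxy, hnotAdj y hy hxy, hnotAdj x hx hxy.symm, hind x hx y hy hxy]
  have huR : u ∉ R := fun h => hu (Set.mem_insert_of_mem v h)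
  by_cases huAdj : G.Adj u v
  · have h1 := hone u huAdj.symm
    rw [Set.insert_inter_of_mem (t := G.neighborSet u) huAdj,
      Set.ncard_insert_of_notMem (fun h => hvR h.1) (Set.finite_of_ncard_ne_zero (by omega)), h1]
    omega
  · rw [Set.insert_inter_of_notMem (t := G.neighborSet u) huAdj]
    exact hcount u huR huv

theorem statement14_general {V : Type*} (G : SimpleGraph V)
    (v : V) :
    (∀ S' : Set (Option V),
      (TypeISet (addLeaf G v) none S' ∧ HasLabel (addLeaf G v) none S' 1) ↔
        ∃ S : Set V, S' = some '' S ∧ TypeISet G v S ∧ HasLabel G v S 0) ∧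
    (∀ R : Set V, TypeISet G v R → HasLabel G v R (-1) →
      TypeISet (addLeaf G v) none (some '' (R ∪ {v})) ∧
        HasLabel (addLeaf G v) none (some '' (R ∪ {v})) 1) := by
  refine ⟨fun S' => ⟨fun ⟨hS', hl⟩ => ?_, ?_⟩, fun R hR hl => ?_⟩
  · have hS'_eq := eq_image_some_preimage_of_none_notMem ((hasLabel_one_iff _ _ _).1 hl).1
    rw [hS'_eq] at hS' hl
    have hv := (hasLabel_addLeaf_one_iff G v _).1 hl
    exact ⟨_, hS'_eq, (typeISet_addLeaf_image_some_iff G v hv).1 hS',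
      (hasLabel_zero_iff G v _).2 hv⟩
  · rintro ⟨S, rfl, hS, hl⟩
    have hv := (hasLabel_zero_iff G v S).1 hl
    exact ⟨(typeISet_addLeaf_image_some_iff G v hv).2 hS, (hasLabel_addLeaf_one_iff G v S).2 hv⟩
  · rw [Set.union_singleton]
    have hv := Set.mem_insert v R
    exact ⟨(typeISet_addLeaf_image_some_iff G v hv).2 (typeISet_insert_of_hasLabel_neg_one hR hl),
      (hasLabel_addLeaf_one_iff G v _).2 hv⟩

theorem statement14 {V : Type*} [Fintype V] [Nontrivial V] (G : SimpleGraph V)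
    (v : V) :
    (∀ S' : Set (Option V),
      (TypeISet (addLeaf G v) none S' ∧ HasLabel (addLeaf G v) none S' 1) ↔
        ∃ S : Set V, S' = some '' S ∧ TypeISet G v S ∧ HasLabel G v S 0) ∧
    (∀ R : Set V, TypeISet G v R → HasLabel G v R (-1) →
      TypeISet (addLeaf G v) none (some '' (R ∪ {v})) ∧
        HasLabel (addLeaf G v) none (some '' (R ∪ {v})) 1) :=
  statement14_general G v
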